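/- arXiv:2604.28153 — 4 statements merged into one kernel-verified Lean document; each statement's English description precedes it below -/
import Mathlib

section
/- Let (Ω, μ) be a measure space, α a type with decidable equality, P : Ω → α → ℝ with P(y, t) ≥ 0 for all y and t, and W̄ : ℝ → ℝ nondecreasing and concave on [0, ∞). For a finite subset T of α define S(T) = ∫_Ω W̄(∑_{t ∈ T} P(y, t)) dμ(y), and assume the integrand is μ-integrable for every finite T. Then for all finite sets T₁ ⊆ T₂ and every x, S(T₁ ∪ {x}) − S(T₁) ≥ S(T₂ ∪ {x}) − S(T₂). -/
open MeasureTheory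

lemma concave_key {W : ℝ → ℝ} (hW : ConcaveOn ℝ (Set.Ici (0 : ℝ)) W)
    {a b c : ℝ} (ha : 0 ≤ a) (hab : a ≤ b) (hc : 0 ≤ c) :
    W (b + c) + W a ≤ W (a + c) + W b := by
  set s := b - a with hs
  have hs0 : 0 ≤ s := by simp [hs]; linarith
  rcases eq_or_lt_of_le (by linarith : (0:ℝ) ≤ s + c) with h | h
  · have hs' : s = 0 := by linarith
    have hc' : c = 0 := by linarith
    have hb : b = a := by simp [hs] at hs'; linarith
    simp [hb, hc']
  · set t := c / (s + c) with ht
    have ht0 : 0 ≤ t := div_nonneg hc (le_of_lt h)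
    have ht1 : t ≤ 1 := (div_le_one h).2 (by linarith)
    have htmul : t * (s + c) = c := div_mul_cancel₀ c h.ne'
    have hbc : (0:ℝ) ≤ b + c := by linarith
    have h1 := hW.2 (Set.mem_Ici.2 ha) (Set.mem_Ici.2 hbc) (by linarith : 0 ≤ 1 - t)
      ht0 (by ring)
    have h2 := hW.2 (Set.mem_Ici.2 ha) (Set.mem_Ici.2 hbc) ht0
      (by linarith : 0 ≤ 1 - t) (by ring)
    have e1 : (1 - t) • a + t • (b + c) = a + c := by
      simp only [smul_eq_mul]; nlinarith [htmul]
    have e2 : t • a + (1 - t) • (b + c) = b := by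
      simp only [smul_eq_mul]; nlinarith [htmul]
    rw [e1] at h1
    rw [e2] at h2
    simp only [smul_eq_mul] at h1 h2
    nlinarith

/-- Proposition 1 of the paper (diminishing returns) for the
aggregate-signal-power model: with `W` nondecreasing and concave on `[0, ∞)`
and `S T = ∫ W (∑ t ∈ T, P y t) dμ(y)`, the marginal gain of adding a
transmitter `x` decreases as the base set grows. -/
theorem diminishing_returns_sum
    {Ω : Type*} [MeasurableSpace Ω] (μ : Measure Ω)
    {α : Type*} [DecidableEq α] (P : Ω → α → ℝ) (hP : ∀ y t, 0 ≤ P y t)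
    (W : ℝ → ℝ) (hWmono : MonotoneOn W (Set.Ici (0 : ℝ)))
    (hWconc : ConcaveOn ℝ (Set.Ici (0 : ℝ)) W)
    (hint : ∀ T : Finset α, Integrable (fun y => W (∑ t ∈ T, P y t)) μ)
    (S : Finset α → ℝ) (hS : ∀ T, S T = ∫ y, W (∑ t ∈ T, P y t) ∂μ) :
    ∀ T₁ T₂ : Finset α, T₁ ⊆ T₂ → ∀ x : α,
      S (insert x T₂) - S T₂ ≤ S (insert x T₁) - S T₁ := by
  intro T₁ T₂ hsub x
  have sum_nonneg : ∀ (T : Finset α) (y : Ω), 0 ≤ ∑ t ∈ T, P y t :=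
    fun T y => Finset.sum_nonneg fun t _ => hP y t
  have sum_mono : ∀ (A B : Finset α), A ⊆ B → ∀ y : Ω,
      ∑ t ∈ A, P y t ≤ ∑ t ∈ B, P y t := fun A B hAB y =>
    Finset.sum_le_sum_of_subset_of_nonneg hAB fun t _ _ => hP y t
  by_cases hx1 : x ∈ T₁
  · rw [Finset.insert_eq_self.2 hx1, Finset.insert_eq_self.2 (hsub hx1)]
    simp
  by_cases hx2 : x ∈ T₂
  · rw [Finset.insert_eq_self.2 hx2]
    have : S T₁ ≤ S (insert x T₁) := by
      rw [hS, hS]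
      refine integral_mono (hint _) (hint _) fun y => ?_
      exact hWmono (Set.mem_Ici.2 (sum_nonneg _ y)) (Set.mem_Ici.2 (sum_nonneg _ y))
        (sum_mono _ _ (Finset.subset_insert x T₁) y)
    linarith
  · -- main case: x ∉ T₂
    have key : S (insert x T₂) + S T₁ ≤ S (insert x T₁) + S T₂ := by
      simp only [hS]
      rw [← integral_add (hint _) (hint _), ← integral_add (hint _) (hint _)]
      refine integral_mono ((hint _).add (hint _)) ((hint _).add (hint _)) fun y => ?_
      simp only [Pi.add_apply]
      rw [Finset.sum_insert hx2, Finset.sum_insert hx1, add_comm (P y x),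
        add_comm (P y x)]
      exact concave_key hWconc (sum_nonneg T₁ y) (sum_mono _ _ hsub y) (hP y x)
    linarith
end

section
/- Let (Ω, μ) be a measure space, α a type with decidable equality, P : Ω → α → ℝ with P(y, t) ≥ 0 for all y and t, and W̄ : ℝ → ℝ nondecreasing on [0, ∞). For a finite subset T of α define S(T) = ∫_Ω W̄(max_{t ∈ T} P(y, t)) dμ(y), with the convention that the maximum over the empty set is 0, and assume the integrand is μ-integrable for every finite T. Then for all finite sets T₁ ⊆ T₂ and every x, S(T₁ ∪ {x}) − S(T₁) ≥ S(T₂ ∪ {x}) − S(T₂). -/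
open MeasureTheory

/-- Proposition 1 of the paper (diminishing returns) for the
maximum-signal-selection model: with `W` nondecreasing on `[0, ∞)` and
`S T = ∫ W (max_{t ∈ T} P y t) dμ(y)` (maximum over `∅` taken to be `0`),
the marginal gain of adding a transmitter `x` decreases as the base set
grows. -/
theorem diminishing_returns_max
    {Ω : Type*} [MeasurableSpace Ω] (μ : Measure Ω)
    {α : Type*} [DecidableEq α] (P : Ω → α → ℝ) (hP : ∀ y t, 0 ≤ P y t)
    (W : ℝ → ℝ) (hWmono : MonotoneOn W (Set.Ici (0 : ℝ)))
    (hint : ∀ T : Finset α, Integrable (fun y => W (T.fold max 0 (P y))) μ)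
    (S : Finset α → ℝ) (hS : ∀ T, S T = ∫ y, W (T.fold max 0 (P y)) ∂μ) :
    ∀ T₁ T₂ : Finset α, T₁ ⊆ T₂ → ∀ x : α,
      S (insert x T₂) - S T₂ ≤ S (insert x T₁) - S T₁ := by
  intro T₁ T₂ hsub x
  have hnn : ∀ (y : Ω) (T : Finset α), 0 ≤ T.fold max 0 (P y) := fun y T =>
    (Finset.le_fold_max _).2 (Or.inl le_rfl)
  have hmono : ∀ (y : Ω), T₁.fold max 0 (P y) ≤ T₂.fold max 0 (P y) := by
    intro y
    refine (Finset.fold_max_le _).2 ⟨hnn y T₂, fun t ht => ?_⟩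
    exact (Finset.le_fold_max _).2 (Or.inr ⟨t, hsub ht, le_rfl⟩)
  have hins : ∀ (y : Ω) (T : Finset α),
      (insert x T).fold max 0 (P y) = max (P y x) (T.fold max 0 (P y)) := by
    intro y T
    exact Finset.fold_insert_idem
  -- pointwise inequality
  have hpt : ∀ y : Ω,
      W ((insert x T₂).fold max 0 (P y)) - W (T₂.fold max 0 (P y)) ≤
      W ((insert x T₁).fold max 0 (P y)) - W (T₁.fold max 0 (P y)) := by
    intro y
    rw [hins y T₁, hins y T₂]
    set m₁ := T₁.fold max 0 (P y) with hm₁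
    set m₂ := T₂.fold max 0 (P y) with hm₂
    have h1 : (0:ℝ) ≤ m₁ := hnn y T₁
    have h2 : (0:ℝ) ≤ m₂ := hnn y T₂
    have h12 : m₁ ≤ m₂ := hmono y
    by_cases hp : P y x ≤ m₂
    · have : max (P y x) m₂ = m₂ := max_eq_right hp
      rw [this]
      have : W m₁ ≤ W (max (P y x) m₁) :=
        hWmono h1 (le_trans h1 (le_max_right _ _)) (le_max_right _ _)
      linarith
    · push_neg at hp
      have hp1 : m₁ ≤ P y x := le_trans h12 hp.le
      rw [max_eq_left hp.le, max_eq_left hp1]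
      have : W m₁ ≤ W m₂ := hWmono h1 h2 h12
      linarith
  rw [hS, hS, hS, hS]
  rw [← integral_sub (hint (insert x T₂)) (hint T₂),
      ← integral_sub (hint (insert x T₁)) (hint T₁)]
  exact integral_mono ((hint _).sub (hint _)) ((hint _).sub (hint _)) hpt
end

section
/- Let α be a type with decidable equality and let F : Finset α → ℝ be monotone (A ⊆ B implies F(A) ≤ F(B)) and submodular (for all finite A ⊆ B and x ∉ B, F(B ∪ {x}) − F(B) ≤ F(A ∪ {x}) − F(A)). Let X be a finite subset of α, T a finite subset of α, ε ∈ [0, 1), k ≥ 1 a natural number, and T* ⊆ X with |T*| = k. Suppose x' ∈ X satisfies the (1−ε)-greedy condition: F(T ∪ {x'}) − F(T) ≥ (1 − ε) · (F(T ∪ {z}) − F(T)) for every z ∈ X. Then F(T*) − F(T) ≤ (k / (1 − ε)) · (F(T ∪ {x'}) − F(T)). -/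
lemma union_gain_le_sum {α : Type*} [DecidableEq α] (F : Finset α → ℝ)
    (hmono : ∀ A B : Finset α, A ⊆ B → F A ≤ F B)
    (hsub : ∀ A B : Finset α, A ⊆ B → ∀ x ∉ B,
      F (insert x B) - F B ≤ F (insert x A) - F A)
    (T : Finset α) :
    ∀ S : Finset α, F (T ∪ S) - F T ≤ ∑ z ∈ S, (F (insert z T) - F T) := by
  intro S
  induction S using Finset.induction_on with
  | empty => simp
  | @insert a S ha ih =>
    rw [Finset.sum_insert ha]
    have h1 : F (T ∪ insert a S) - F (T ∪ S) ≤ F (insert a T) - F T := by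
      by_cases haTS : a ∈ T ∪ S
      · have : T ∪ insert a S = T ∪ S := by
          rw [Finset.union_insert, Finset.insert_eq_self.mpr haTS]
        rw [this]
        have := hmono T (insert a T) (Finset.subset_insert a T)
        linarith
      · rw [Finset.union_insert]
        exact hsub T (T ∪ S) Finset.subset_union_left a haTS
    linarith

/-- One-step inequality in the proof of the paper's Theorem 3: for a monotone
submodular `F`, if `x'` is a `(1 − ε)`-greedy pick over the candidate set `X`,
then for any `k`-element `T* ⊆ X`,
`F T* − F T ≤ (k / (1 − ε)) · (F (T ∪ {x'}) − F T)`. -/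
theorem greedy_one_step_gap_bound
    {α : Type*} [DecidableEq α] (F : Finset α → ℝ)
    (hmono : ∀ A B : Finset α, A ⊆ B → F A ≤ F B)
    (hsub : ∀ A B : Finset α, A ⊆ B → ∀ x ∉ B,
      F (insert x B) - F B ≤ F (insert x A) - F A)
    (X T Tstar : Finset α) (ε : ℝ) (hε0 : 0 ≤ ε) (hε1 : ε < 1)
    (k : ℕ) (hk : 1 ≤ k) (hTX : Tstar ⊆ X) (hcard : Tstar.card = k)
    (x' : α) (hx'X : x' ∈ X)
    (hgreedy : ∀ z ∈ X, F (insert x' T) - F T ≥ (1 - ε) * (F (insert z T) - F T)) :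
    F Tstar - F T ≤ ((k : ℝ) / (1 - ε)) * (F (insert x' T) - F T) := by
  have hεpos : (0 : ℝ) < 1 - ε := by linarith
  have h1 : F Tstar ≤ F (T ∪ Tstar) := hmono _ _ Finset.subset_union_right
  have h2 := union_gain_le_sum F hmono hsub T Tstar
  have h3 : ∑ z ∈ Tstar, (F (insert z T) - F T)
      ≤ ∑ _z ∈ Tstar, (F (insert x' T) - F T) / (1 - ε) := by
    apply Finset.sum_le_sum
    intro z hz
    have := hgreedy z (hTX hz)
    rw [ge_iff_le, ← le_div_iff₀' hεpos] at this
    exact this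
  rw [Finset.sum_const, hcard, nsmul_eq_mul] at h3
  have : (k : ℝ) * ((F (insert x' T) - F T) / (1 - ε))
      = ((k : ℝ) / (1 - ε)) * (F (insert x' T) - F T) := by ring
  linarith [h2, h3, this ▸ h3]
end

section
/- Let α be a type with decidable equality and let F : Finset α → ℝ satisfy F(∅) = 0, be monotone (A ⊆ B implies F(A) ≤ F(B)), and be submodular (for all finite A ⊆ B and x ∉ B, F(B ∪ {x}) − F(B) ≤ F(A ∪ {x}) − F(A)). Let X be a finite subset of α, ε ∈ [0, 1), and let x : ℕ → α be a sequence with x(n+1) ∈ X for all n. Define T(0) = ∅ and T(n+1) = T(n) ∪ {x(n+1)}, and suppose each pick is (1−ε)-greedy: for every n and every z ∈ X, F(T(n) ∪ {x(n+1)}) − F(T(n)) ≥ (1 − ε) · (F(T(n) ∪ {z}) − F(T(n))). Then for every natural number k ≥ 1, every T* ⊆ X with |T*| = k, and every n, (1 − exp(−n · (1 − ε) / k)) · F(T*) ≤ F(T(n)). -/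
/-!
Submodularity bounds the gap `F T* - F A` by the sum of the `k` single-element gains
`F (A ∪ {z}) - F A`, `z ∈ T*`, each of which an `ε`-greedy pick dominates up to the factor
`1 - ε`. So every greedy step shrinks the gap by the factor `1 - (1 - ε) / k`, and
`(1 - c) ^ n ≤ exp (-n c)` turns the geometric decay into the stated exponential bound.
-/

open Finset

section Submodular

variable {α : Type*} [DecidableEq α] {F : Finset α → ℝ}

theorem union_sub_le_sum_insert_sub
    (hsub : ∀ A B : Finset α, A ⊆ B → ∀ x ∉ B, F (insert x B) - F B ≤ F (insert x A) - F A)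
    (S A : Finset α) : F (S ∪ A) - F A ≤ ∑ z ∈ S, (F (insert z A) - F A) := by
  induction S using Finset.induction_on with
  | empty => simp
  | @insert a S haS ih =>
    rw [sum_insert haS, insert_union]
    have hgain : F (insert a (S ∪ A)) - F (S ∪ A) ≤ F (insert a A) - F A := by
      by_cases ha : a ∈ S ∪ A
      · have haA : a ∈ A := (mem_union.1 ha).resolve_left haS
        simp [insert_eq_of_mem ha, insert_eq_of_mem haA]
      · exact hsub A (S ∪ A) subset_union_right a ha
    linarith

theorem sub_le_one_sub_mul_of_greedy_step
    (hmono : ∀ A B : Finset α, A ⊆ B → F A ≤ F B)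
    (hsub : ∀ A B : Finset α, A ⊆ B → ∀ x ∉ B, F (insert x B) - F B ≤ F (insert x A) - F A)
    {S A B : Finset α} {c : ℝ} (hc : 0 ≤ c) (hS : S.Nonempty)
    (hgreedy : ∀ z ∈ S, c * (F (insert z A) - F A) ≤ F B - F A) :
    F S - F B ≤ (1 - c / #S) * (F S - F A) := by
  have hcard : (0 : ℝ) < #S := by exact_mod_cast hS.card_pos
  have hsum : c * (F S - F A) ≤ #S * (F B - F A) :=
    calc c * (F S - F A) ≤ c * (F (S ∪ A) - F A) := by
          gcongr; exact hmono S (S ∪ A) subset_union_left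
      _ ≤ c * ∑ z ∈ S, (F (insert z A) - F A) := by
          gcongr; exact union_sub_le_sum_insert_sub hsub S A
      _ = ∑ z ∈ S, c * (F (insert z A) - F A) := mul_sum _ _ _
      _ ≤ ∑ _z ∈ S, (F B - F A) := sum_le_sum hgreedy
      _ = #S * (F B - F A) := by rw [sum_const, nsmul_eq_mul]
  have hdecrease : c / #S * (F S - F A) ≤ F B - F A := by
    rw [div_mul_eq_mul_div, div_le_iff₀ hcard]
    linarith
  linarith [sub_mul 1 (c / #S) (F S - F A)]

end Submodular

theorem one_sub_pow_le_exp_neg_mul {c : ℝ} (hc : c ≤ 1) (n : ℕ) :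
    (1 - c) ^ n ≤ Real.exp (-(n * c)) :=
  calc (1 - c) ^ n ≤ Real.exp (-c) ^ n :=
        pow_le_pow_left₀ (sub_nonneg.2 hc) (Real.one_sub_le_exp_neg c) n
    _ = Real.exp (-(n * c)) := by rw [← Real.exp_nat_mul, mul_neg]

theorem ia_spa_performance_guarantee_general
    {α : Type*} [DecidableEq α] (F : Finset α → ℝ)
    (hempty : F ∅ = 0)
    (hmono : ∀ A B : Finset α, A ⊆ B → F A ≤ F B)
    (hsub : ∀ A B : Finset α, A ⊆ B → ∀ x ∉ B,
      F (insert x B) - F B ≤ F (insert x A) - F A)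
    (X : Finset α) (ε : ℝ) (hε0 : 0 ≤ ε) (hε1 : ε < 1)
    (x : ℕ → α)
    (T : ℕ → Finset α) (hT0 : T 0 = ∅)
    (hTs : ∀ n, T (n + 1) = insert (x (n + 1)) (T n))
    (hgreedy : ∀ n, ∀ z ∈ X,
      F (insert (x (n + 1)) (T n)) - F (T n)
        ≥ (1 - ε) * (F (insert z (T n)) - F (T n))) :
    ∀ k : ℕ, 1 ≤ k → ∀ Tstar : Finset α, Tstar ⊆ X → Tstar.card = k →
      ∀ n : ℕ, (1 - Real.exp (-((n : ℝ) * (1 - ε) / (k : ℝ)))) * F Tstar ≤ F (T n) := by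
  intro k hk Tstar hTX hTk n
  have hk' : (1 : ℝ) ≤ k := by exact_mod_cast hk
  have hc : (1 - ε) / k ≤ 1 := by rw [div_le_one (by linarith)]; linarith
  have hstep : ∀ m, F Tstar - F (T (m + 1)) ≤ (1 - (1 - ε) / k) * (F Tstar - F (T m)) := by
    intro m
    rw [hTs m, ← hTk]
    exact sub_le_one_sub_mul_of_greedy_step hmono hsub (by linarith)
      (card_pos.1 (hTk ▸ hk)) fun z hz => hgreedy m z (hTX hz)
  have hgap : F Tstar - F (T n) ≤ (1 - (1 - ε) / k) ^ n * F Tstar := by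
    simpa [hT0, hempty] using
      le_geom (u := fun m => F Tstar - F (T m)) (sub_nonneg.2 hc) n fun m _ => hstep m
  have hexp := one_sub_pow_le_exp_neg_mul hc n
  rw [← mul_div_assoc] at hexp
  have hFstar : 0 ≤ F Tstar := hempty ▸ hmono ∅ Tstar (empty_subset _)
  nlinarith [mul_le_mul_of_nonneg_right hexp hFstar]

/-- The paper's Theorem 3 (performance guarantee for the ε-greedy IA-SPA):
for a normalized, monotone, submodular set function `F`, the sets `T n`
produced by the `(1 − ε)`-greedy algorithm over a finite candidate set `X`
satisfy `(1 − e^{−n(1−ε)/k}) F T* ≤ F (T n)` for every `k`-element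
`T* ⊆ X`. -/
theorem ia_spa_performance_guarantee
    {α : Type*} [DecidableEq α] (F : Finset α → ℝ)
    (hempty : F ∅ = 0)
    (hmono : ∀ A B : Finset α, A ⊆ B → F A ≤ F B)
    (hsub : ∀ A B : Finset α, A ⊆ B → ∀ x ∉ B,
      F (insert x B) - F B ≤ F (insert x A) - F A)
    (X : Finset α) (ε : ℝ) (hε0 : 0 ≤ ε) (hε1 : ε < 1)
    (x : ℕ → α) (hxX : ∀ n, x (n + 1) ∈ X)
    (T : ℕ → Finset α) (hT0 : T 0 = ∅)
    (hTs : ∀ n, T (n + 1) = insert (x (n + 1)) (T n))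
    (hgreedy : ∀ n, ∀ z ∈ X,
      F (insert (x (n + 1)) (T n)) - F (T n)
        ≥ (1 - ε) * (F (insert z (T n)) - F (T n))) :
    ∀ k : ℕ, 1 ≤ k → ∀ Tstar : Finset α, Tstar ⊆ X → Tstar.card = k →
      ∀ n : ℕ, (1 - Real.exp (-((n : ℝ) * (1 - ε) / (k : ℝ)))) * F Tstar ≤ F (T n) :=
  ia_spa_performance_guarantee_general F hempty hmono hsub X ε hε0 hε1 x T hT0 hTs hgreedy
end
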